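/- arXiv:1507.00081 — 2 statements merged into one kernel-verified Lean document; each statement's English description precedes it below -/
import Mathlib

section
/- Let V be an n-dimensional vector space over a field of characteristic zero, and let p, q be rank 1 projectors on V. Then pqp = (1/n)p if and only if qpq = (1/n)q. -/
theorem unbiased_symm (K : Type*) [Field K] [CharZero K]
    (V : Type*) [AddCommGroup V] [Module K V] [FiniteDimensional K V]
    (n : ℕ) (hn : Module.finrank K V = n)
    (p q : V →ₗ[K] V) (hp : p ∘ₗ p = p) (hq : q ∘ₗ q = q)
    (hrp : LinearMap.rank p = 1) (hrq : LinearMap.rank q = 1) :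
    p ∘ₗ q ∘ₗ p = (1 / (n : K)) • p ↔ q ∘ₗ p ∘ₗ q = (1 / (n : K)) • q := by
  rw [LinearMap.rank, rank_eq_one_iff] at hrp hrq
  obtain ⟨⟨v, u, huv⟩, hv0, hv⟩ := hrp
  obtain ⟨⟨w, s, hsw⟩, hw0, hw⟩ := hrq
  have hv0' : v ≠ 0 := fun h => hv0 (Subtype.ext h)
  have hw0' : w ≠ 0 := fun h => hw0 (Subtype.ext h)
  -- p v = v, q w = w
  have hpv : p v = v := by
    rw [← huv, ← LinearMap.comp_apply, hp]
  have hqw : q w = w := by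
    rw [← hsw, ← LinearMap.comp_apply, hq]
  -- for all x, p x is a multiple of v; q x multiple of w
  have hvm : ∀ x : V, ∃ r : K, p x = r • v := by
    intro x
    obtain ⟨r, hr⟩ := hv ⟨p x, x, rfl⟩
    exact ⟨r, congrArg Subtype.val hr.symm⟩
  have hwm : ∀ x : V, ∃ r : K, q x = r • w := by
    intro x
    obtain ⟨r, hr⟩ := hw ⟨q x, x, rfl⟩
    exact ⟨r, congrArg Subtype.val hr.symm⟩
  obtain ⟨a, ha⟩ := hvm w   -- p w = a • v
  obtain ⟨b, hb⟩ := hwm v   -- q v = b • w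
  set c : K := a * b with hc
  have hpqp : p ∘ₗ q ∘ₗ p = c • p := by
    ext x
    obtain ⟨r, hr⟩ := hvm x
    simp only [LinearMap.comp_apply, LinearMap.smul_apply, hr, map_smul, hb, ha,
      smul_smul, hc]
    ring_nf
  have hqpq : q ∘ₗ p ∘ₗ q = c • q := by
    ext x
    obtain ⟨r, hr⟩ := hwm x
    simp only [LinearMap.comp_apply, LinearMap.smul_apply, hr, map_smul, ha, hb,
      smul_smul, hc]
    ring_nf
  constructor
  · intro h
    have : c • v = (1 / (n : K)) • v := by
      have := congrArg (fun f => f v) (hpqp.symm.trans h)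
      simpa [LinearMap.comp_apply, hpv, hb, ha, smul_smul, hc, mul_comm] using this
    have hceq : c = 1 / (n : K) := by
      have := sub_eq_zero.mpr this
      rw [← sub_smul] at this
      rcases smul_eq_zero.mp this with h' | h'
      · exact sub_eq_zero.mp h'
      · exact absurd h' hv0'
    rw [hqpq, hceq]
  · intro h
    have : c • w = (1 / (n : K)) • w := by
      have := congrArg (fun f => f w) (hqpq.symm.trans h)
      simpa [LinearMap.comp_apply, hqw, ha, hb, smul_smul, hc, mul_comm] using this
    have hceq : c = 1 / (n : K) := by
      have := sub_eq_zero.mpr this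
      rw [← sub_smul] at this
      rcases smul_eq_zero.mp this with h' | h'
      · exact sub_eq_zero.mp h'
      · exact absurd h' hw0'
    rw [hpqp, hceq]
end

section
/- Suppose there exist m pairwise algebraically unbiased complete systems of orthogonal rank 1 projectors on an n-dimensional complex vector space (each system consists of n pairwise orthogonal rank 1 projectors summing to the identity, and any two projectors from distinct systems p, q satisfy Tr(pq) = 1/n). Then m ≤ n + 1. -/
open Matrix

theorem card_pairwise_unbiased_systems_le (n m : ℕ) (hn : 1 < n)
    (P : Fin m → Fin n → Matrix (Fin n) (Fin n) ℂ)
    (hidem : ∀ s i, P s i * P s i = P s i)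
    (hrank : ∀ s i, (P s i).rank = 1)
    (horth : ∀ s, ∀ i j, i ≠ j → P s i * P s j = 0)
    (hsum : ∀ s, ∑ i, P s i = 1)
    (hunb : ∀ s t, s ≠ t → ∀ i j, (P s i * P t j).trace = (n : ℂ)⁻¹) :
    m ≤ n + 1 := by
  rcases le_or_gt m 1 with hm | hm
  · omega
  obtain ⟨k, rfl⟩ : ∃ k, n = k + 1 := ⟨n - 1, by omega⟩
  have hk : 1 ≤ k := by omega
  set a : ℂ := ((k + 1 : ℕ) : ℂ)⁻¹ with ha
  have hn0 : ((k + 1 : ℕ) : ℂ) ≠ 0 := Nat.cast_ne_zero.mpr (by omega)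
  haveI : Nontrivial (Fin m) := Fin.nontrivial_iff_two_le.mpr hm
  -- every projector has trace 1
  have htr : ∀ s i, (P s i).trace = 1 := by
    intro s i
    obtain ⟨t, ht⟩ := exists_ne s
    have h1 : P s i = ∑ j, P s i * P t j := by
      rw [← Finset.mul_sum, hsum, mul_one]
    rw [h1, trace_sum]
    have : ∀ j ∈ Finset.univ, (P s i * P t j).trace = a :=
      fun j _ => hunb s t (Ne.symm ht) i j
    rw [Finset.sum_congr rfl this, Finset.sum_const, Finset.card_univ,
      Fintype.card_fin, nsmul_eq_mul, ha, mul_inv_cancel₀ hn0]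
  -- trace of pairwise products
  have tPP : ∀ s i t j, (P s i * P t j).trace
      = if s = t then (if i = j then 1 else 0) else a := by
    intro s i t j
    by_cases hst : s = t
    · subst hst
      by_cases hij : i = j
      · subst hij; rw [hidem, htr]; simp
      · rw [horth s i j hij, trace_zero]; simp [hij]
    · rw [hunb s t hst]; simp [hst]
  -- the independent family
  set g : Option (Fin m × Fin k) → Matrix (Fin (k + 1)) (Fin (k + 1)) ℂ :=
    fun x => Option.elim x 1 (fun p => P p.1 p.2.succ - a • 1) with hg
  have hli : LinearIndependent ℂ g := by
    rw [Fintype.linearIndependent_iff]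
    intro c hc
    -- pairing with P t j
    have key : ∀ t (j : Fin (k + 1)),
        c none + ∑ i : Fin k, c (some (t, i)) *
          ((if i.succ = j then (1 : ℂ) else 0) - a) = 0 := by
      intro t j
      have h0 := congrArg (fun M : Matrix (Fin (k+1)) (Fin (k+1)) ℂ => (M * P t j).trace) hc
      simp only [Matrix.zero_mul, trace_zero, Finset.sum_mul, smul_mul_assoc] at h0
      rw [trace_sum] at h0
      simp only [trace_smul, smul_eq_mul] at h0
      rw [Fintype.sum_option] at h0
      simp only [hg, Option.elim] at h0
      rw [Matrix.one_mul] at h0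
      have hterm : ∀ p : Fin m × Fin k,
          ((P p.1 p.2.succ - a • 1) * P t j).trace
            = (if p.1 = t then (if p.2.succ = j then (1:ℂ) else 0) else a) - a := by
        intro p
        rw [Matrix.sub_mul, trace_sub, Matrix.smul_mul, Matrix.one_mul, trace_smul,
          smul_eq_mul, htr, mul_one, tPP]
      rw [Finset.sum_congr rfl (fun p _ => by rw [hterm p])] at h0
      rw [htr, mul_one] at h0
      rw [Fintype.sum_prod_type] at h0
      rw [Finset.sum_eq_single_of_mem t (Finset.mem_univ t)
        (fun s _ hs => by simp [hs])] at h0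
      simpa using h0
    -- evaluate the key identity
    have keyval : ∀ t (j : Fin (k + 1)),
        c none + (∑ i : Fin k, if i.succ = j then c (some (t, i)) else 0)
          - a * ∑ i : Fin k, c (some (t, i)) = 0 := by
      intro t j
      have h1 := key t j
      have h2 : ∀ i ∈ Finset.univ, c (some (t, i)) * ((if i.succ = j then (1:ℂ) else 0) - a)
          = (if i.succ = j then c (some (t, i)) else 0) - a * c (some (t, i)) := by
        intro i _
        by_cases h : i.succ = j <;> simp [h] <;> ring
      rw [Finset.sum_congr rfl h2, Finset.sum_sub_distrib, ← Finset.mul_sum] at h1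
      linear_combination h1
    -- coefficients on projectors vanish
    have hcsome : ∀ t (i : Fin k), c (some (t, i)) = 0 := by
      intro t i0
      have h1 := keyval t i0.succ
      have h2 := keyval t 0
      have e1 : (∑ i : Fin k, if i.succ = i0.succ then c (some (t, i)) else 0)
          = c (some (t, i0)) := by
        simp only [Fin.succ_inj]
        simp [Finset.sum_ite_eq']
      have e2 : (∑ i : Fin k, if i.succ = (0 : Fin (k+1)) then c (some (t, i)) else 0)
          = 0 := by
        apply Finset.sum_eq_zero
        intro i _
        simp [Fin.succ_ne_zero i]
      rw [e1] at h1
      rw [e2] at h2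
      linear_combination h1 - h2
    have hcnone : c none = 0 := by
      have h2 := keyval ⟨0, by omega⟩ 0
      have e2 : (∑ i : Fin k, if i.succ = (0 : Fin (k+1)) then c (some ((⟨0, by omega⟩ : Fin m), i)) else 0)
          = 0 := Finset.sum_eq_zero fun i _ => by simp [Fin.succ_ne_zero i]
      have e3 : (∑ i : Fin k, c (some ((⟨0, by omega⟩ : Fin m), i))) = 0 :=
        Finset.sum_eq_zero fun i _ => hcsome _ i
      rw [e2, e3] at h2
      linear_combination h2
    intro x
    rcases x with _ | ⟨t, i⟩
    · exact hcnone
    · exact hcsome t i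
  -- dimension count
  have hcard := hli.fintype_card_le_finrank
  rw [Module.finrank_matrix] at hcard
  simp only [Fintype.card_option, Fintype.card_prod, Fintype.card_fin,
    Module.finrank_self, mul_one] at hcard
  nlinarith [hcard, hk]
end
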